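/- arXiv:1709.03936 — 4 statements merged into one kernel-verified Lean document; each statement's English description precedes it below -/
import Mathlib

section
/- Let d ≥ 1 and let E be an edge measurement ensemble with |E| ≤ C(d+2,2) edges. If E is infinitesimally dependent in d dimensions, then |E| = C(d+2,2) and E consists of the edges of a complete subgraph K_{d+2} of K_n (in some order). -/
/-- Complex squared length along an edge: `Σ_k (p_i^k − p_j^k)²`. -/
noncomputable def cSqLen {n d : ℕ} (p : Fin n → Fin d → ℂ) : Sym2 (Fin n) → ℂ :=
  Sym2.lift ⟨fun i j => ∑ k, (p i k - p j k) ^ 2,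
    fun i j => Finset.sum_congr rfl fun k _ => by ring⟩

/-- A generic complex configuration of `n` points in ℂ^d. -/
def GenericConfigC {n d : ℕ} (p : Fin n → Fin d → ℂ) : Prop :=
  ∀ f : MvPolynomial (Fin n × Fin d) ℚ, f ≠ 0 →
    MvPolynomial.aeval (fun ik : Fin n × Fin d => p ik.1 ik.2) f ≠ 0

/-- The squared measurement map of an edge measurement ensemble `E`. -/
noncomputable def mE {n d k : ℕ} (E : Fin k → Sym2 (Fin n))
    (p : Fin n → Fin d → ℂ) : Fin k → ℂ :=
  fun j => cSqLen p (E j)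

open Finset

noncomputable section AuxDefs

variable {n d : ℕ}

/-- Row of the rigidity (Jacobian) matrix for an edge. -/
def rowVec (p : Fin n → Fin d → ℂ) : Sym2 (Fin n) → (Fin n × Fin d) → ℂ :=
  Sym2.lift ⟨fun a b => fun il =>
      (if il.1 = a then 2 * (p a il.2 - p b il.2) else 0)
      + (if il.1 = b then 2 * (p b il.2 - p a il.2) else 0),
    fun _ _ => funext fun _ => add_comm _ _⟩

lemma rowVec_mk (p : Fin n → Fin d → ℂ) (a b : Fin n) (il : Fin n × Fin d) :
    rowVec p s(a, b) il =
      (if il.1 = a then 2 * (p a il.2 - p b il.2) else 0)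
      + (if il.1 = b then 2 * (p b il.2 - p a il.2) else 0) := rfl

lemma rowVec_apply_not_mem (p : Fin n → Fin d → ℂ) {e : Sym2 (Fin n)} {v : Fin n}
    (h : v ∉ e) (l : Fin d) : rowVec p e (v, l) = 0 := by
  revert h
  induction e using Sym2.ind with
  | _ a b =>
    intro h
    rw [Sym2.mem_iff] at h
    push_neg at h
    rw [rowVec_mk]
    simp [h.1, h.2]

lemma rowVec_apply_other (p : Fin n → Fin d → ℂ) {e : Sym2 (Fin n)} {v : Fin n}
    (h : v ∈ e) (hnd : ¬ e.IsDiag) (l : Fin d) :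
    rowVec p e (v, l) = 2 * (p v l - p (Sym2.Mem.other h) l) := by
  have hne : v ≠ Sym2.Mem.other h := (Sym2.other_ne hnd h).symm
  conv_lhs => rw [← Sym2.other_spec h]
  rw [rowVec_mk]
  rw [if_pos (show ((v, l) : Fin n × Fin d).1 = v from rfl),
    if_neg (show ¬ ((v, l) : Fin n × Fin d).1 = Sym2.Mem.other h from hne), add_zero]

/-- Coordinate projection as a continuous linear map. -/
def coordCLM (i : Fin n) (l : Fin d) : (Fin n → Fin d → ℂ) →L[ℂ] ℂ :=
  (ContinuousLinearMap.proj (R := ℂ) (φ := fun _ : Fin d => ℂ) l).comp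
    (ContinuousLinearMap.proj (R := ℂ) (φ := fun _ : Fin n => Fin d → ℂ) i)

@[simp] lemma coordCLM_apply (i : Fin n) (l : Fin d) (q : Fin n → Fin d → ℂ) :
    coordCLM i l q = q i l := rfl

/-- Row functional. -/
def Lrow (r : (Fin n × Fin d) → ℂ) : (Fin n → Fin d → ℂ) →L[ℂ] ℂ :=
  ∑ il : Fin n × Fin d, r il • coordCLM il.1 il.2

lemma Lrow_apply (r : (Fin n × Fin d) → ℂ) (q : Fin n → Fin d → ℂ) :
    Lrow r q = ∑ il : Fin n × Fin d, r il * q il.1 il.2 := by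
  simp [Lrow, ContinuousLinearMap.sum_apply]

lemma hasFDerivAt_cSqLen (e : Sym2 (Fin n)) (p : Fin n → Fin d → ℂ) :
    HasFDerivAt (fun p => cSqLen p e) (Lrow (rowVec p e)) p := by
  induction e using Sym2.ind with
  | _ a b =>
    have h1 : (fun p : Fin n → Fin d → ℂ => cSqLen p s(a, b))
        = fun p => ∑ l, (p a l - p b l) ^ 2 := by
      funext p; simp [cSqLen]
    rw [h1]
    have key : ∀ l : Fin d, HasFDerivAt (fun p : Fin n → Fin d → ℂ => (p a l - p b l) ^ 2)
        ((2 * (p a l - p b l)) • (coordCLM a l - coordCLM b l)) p := by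
      intro l
      have hL : HasFDerivAt (fun p : Fin n → Fin d → ℂ => p a l - p b l)
          (coordCLM a l - coordCLM b l) p := by
        have h := (coordCLM a l - coordCLM b l).hasFDerivAt (x := p)
        have : ⇑(coordCLM a l - coordCLM b l) = fun p : Fin n → Fin d → ℂ => p a l - p b l := by
          funext q; simp
        rwa [this] at h
      have hmul : HasFDerivAt (fun p : Fin n → Fin d → ℂ => (p a l - p b l) * (p a l - p b l)) _ p :=
        hL.mul hL
      have h2 : (fun p : Fin n → Fin d → ℂ => (p a l - p b l) ^ 2)
          = fun p => (p a l - p b l) * (p a l - p b l) := by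
        funext p; ring
      rw [h2]
      convert hmul using 1
      rotate_right
      ext q
      simp only [ContinuousLinearMap.coe_smul', Pi.smul_apply, smul_eq_mul,
        ContinuousLinearMap.add_apply, ContinuousLinearMap.coe_smul']
      ring_nf
      all_goals rfl
    have hsum := HasFDerivAt.fun_sum (fun l (_ : l ∈ (univ : Finset (Fin d))) => key l)
    convert hsum using 1
    rotate_right
    ext q
    simp only [Lrow, ContinuousLinearMap.coe_sum', Finset.sum_apply,
      ContinuousLinearMap.coe_smul', Pi.smul_apply, coordCLM_apply,
      ContinuousLinearMap.coe_sub', Pi.sub_apply, smul_eq_mul, rowVec_mk]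
    rw [Fintype.sum_prod_type]
    simp only [add_mul, ite_mul, zero_mul, Finset.sum_add_distrib]
    have pull : ∀ (c : Fin n) (f : Fin n → Fin d → ℂ),
        (∑ x : Fin n, ∑ x1 : Fin d, if x = c then f x x1 else 0)
          = ∑ x1 : Fin d, f c x1 := by
      intro c f
      have : ∀ x : Fin n, (∑ x1 : Fin d, if x = c then f x x1 else 0)
          = if x = c then ∑ x1 : Fin d, f x x1 else 0 := by
        intro x; split_ifs <;> simp
      simp only [this, Finset.sum_ite_eq', Finset.mem_univ, if_true]
    rw [pull a (fun x x1 => 2 * (p a x1 - p b x1) * q x x1),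
        pull b (fun x x1 => 2 * (p b x1 - p a x1) * q x x1),
        ← Finset.sum_add_distrib]
    apply Finset.sum_congr rfl
    intro l _
    ring
    all_goals rfl

end AuxDefs

noncomputable section RankSection

variable {n d k : ℕ}

def Jmat (E : Fin k → Sym2 (Fin n)) (p : Fin n → Fin d → ℂ) :
    Matrix (Fin k) (Fin n × Fin d) ℂ :=
  Matrix.of fun j => rowVec p (E j)

lemma hasFDerivAt_mE (E : Fin k → Sym2 (Fin n)) (p : Fin n → Fin d → ℂ) :
    HasFDerivAt (mE E) (ContinuousLinearMap.pi fun j => Lrow (rowVec p (E j))) p :=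
  hasFDerivAt_pi.2 fun j => hasFDerivAt_cSqLen (E j) p

lemma finrank_fderiv_eq (E : Fin k → Sym2 (Fin n)) (p : Fin n → Fin d → ℂ)
    (h : LinearIndependent ℂ (Jmat E p)) :
    Module.finrank ℂ (LinearMap.range ((fderiv ℂ (mE E) p).toLinearMap)) = k := by
  have hD := (hasFDerivAt_mE E p).fderiv
  rw [hD]
  have hU : ((ContinuousLinearMap.pi fun j => Lrow (rowVec p (E j))).toLinearMap :
        (Fin n → Fin d → ℂ) →ₗ[ℂ] (Fin k → ℂ))
      = (Jmat E p).mulVecLin.comp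
        ((LinearEquiv.curry ℂ ℂ (Fin n) (Fin d)).symm.toLinearMap) := by
    apply LinearMap.ext; intro q; funext j
    simp only [ContinuousLinearMap.coe_coe, ContinuousLinearMap.pi_apply,
      LinearMap.coe_comp, Function.comp_apply, LinearEquiv.coe_coe,
      Matrix.mulVecLin_apply, Matrix.mulVec, dotProduct, Lrow_apply]
    apply Finset.sum_congr rfl
    intro il _
    congr 1
  rw [hU, LinearMap.range_comp, LinearEquiv.range, Submodule.map_top]
  have : Module.finrank ℂ (LinearMap.range (Jmat E p).mulVecLin) = (Jmat E p).rank := rfl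
  rw [this]
  unfold Jmat
  rw [h.rank_matrix]
  simp

end RankSection

section Generic

lemma generic_diffs_indep {n d : ℕ} {p : Fin n → Fin d → ℂ} (hp : GenericConfigC p)
    {ι : Type} [Fintype ι] [DecidableEq ι] (hcard : Fintype.card ι ≤ d)
    (v : Fin n) (u : ι → Fin n) (hu : Function.Injective u) (huv : ∀ i, u i ≠ v)
    (c : ι → ℂ) (hc : ∀ l : Fin d, ∑ i, c i * (p v l - p (u i) l) = 0) :
    c = 0 := by
  classical
  set t := Fintype.card ι with ht
  let e : ι ≃ Fin t := Fintype.equivFin ι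
  let cL : Fin t → Fin d := Fin.castLE hcard
  have hcL : Function.Injective cL := Fin.castLE_injective hcard
  let N : Matrix (Fin t) (Fin t) (MvPolynomial (Fin n × Fin d) ℚ) :=
    Matrix.of fun i l => MvPolynomial.X (v, cL l) - MvPolynomial.X (u (e.symm i), cL l)
  let f := N.det
  have hf : f ≠ 0 := by
    intro h0
    let g : Fin n × Fin d → ℚ := fun wl =>
      if ∃ i : ι, u i = wl.1 ∧ cL (e i) = wl.2 then -1 else 0
    have : (MvPolynomial.aeval g) f = 1 := by
      have hmap : N.map (MvPolynomial.aeval g) = (1 : Matrix (Fin t) (Fin t) ℚ) := by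
        ext i l
        simp only [Matrix.map_apply, N, Matrix.of_apply, map_sub, MvPolynomial.aeval_X]
        have hgv : g (v, cL l) = 0 := by
          simp only [g]
          rw [if_neg]
          rintro ⟨i, hi, -⟩; exact huv i hi
        have hgu : g (u (e.symm i), cL l) = if i = l then -1 else 0 := by
          simp only [g]
          congr 1
          simp only [eq_iff_iff]
          constructor
          · rintro ⟨i', hi', hl'⟩
            have h1 : i' = e.symm i := hu hi'
            have h2 : e i' = l := hcL hl'
            rw [h1] at h2
            simpa using h2
          · rintro rfl
            exact ⟨e.symm i, rfl, by simp⟩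
        rw [hgv, hgu]
        by_cases h : i = l <;> simp [h, Matrix.one_apply]
      rw [show f = N.det from rfl, AlgHom.map_det, AlgHom.mapMatrix_apply, hmap,
        Matrix.det_one]
    rw [h0] at this
    simp at this
  have hev := hp f hf
  let B : Matrix (Fin t) (Fin t) ℂ :=
    Matrix.of fun i l => p v (cL l) - p (u (e.symm i)) (cL l)
  have hB : (MvPolynomial.aeval (fun ik : Fin n × Fin d => p ik.1 ik.2)) f = B.det := by
    rw [show f = N.det from rfl, AlgHom.map_det, AlgHom.mapMatrix_apply]
    congr 1
    ext i l
    simp [N, B]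
  rw [hB] at hev
  have hvm : Matrix.vecMul (fun i => c (e.symm i)) B = 0 := by
    funext l
    simp only [Matrix.vecMul, dotProduct, B, Matrix.of_apply, Pi.zero_apply]
    rw [Equiv.sum_comp e.symm (fun i => c i * (p v (cL l) - p (u i) (cL l)))]
    exact hc (cL l)
  have hunit : IsUnit B.det := isUnit_iff_ne_zero.2 hev
  have hcz : (fun i => c (e.symm i)) = 0 := by
    have h1 := congrArg (fun w => Matrix.vecMul w B⁻¹) hvm
    simpa [Matrix.vecMul_vecMul, Matrix.mul_nonsing_inv B hunit] using h1
  funext i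
  have := congrFun hcz (e i)
  simpa using this

end Generic

section Comb

variable {n d : ℕ}

lemma card_filter_mem_sym2 (e : Sym2 (Fin n)) (hnd : ¬ e.IsDiag) :
    ((univ : Finset (Fin n)).filter (fun v => v ∈ e)).card = 2 := by
  revert hnd
  induction e using Sym2.ind with
  | _ a b =>
    intro hnd
    have hab : a ≠ b := by simpa using hnd
    have : (univ : Finset (Fin n)).filter (fun v => v ∈ s(a, b)) = {a, b} := by
      ext v; simp [Sym2.mem_iff]
    rw [this, Finset.card_insert_of_notMem (by simp [hab]), Finset.card_singleton]

lemma sum_deg_eq (F : Finset (Sym2 (Fin n))) (hnd : ∀ e ∈ F, ¬ e.IsDiag) :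
    ∑ v : Fin n, (F.filter (fun e => v ∈ e)).card = 2 * F.card := by
  classical
  simp_rw [Finset.card_filter]
  rw [Finset.sum_comm]
  have : ∀ e ∈ F, (∑ v : Fin n, if v ∈ e then 1 else 0) = 2 := by
    intro e he
    rw [← Finset.card_filter]
    exact card_filter_mem_sym2 e (hnd e he)
  rw [Finset.sum_congr rfl this, Finset.sum_const, smul_eq_mul, mul_comm]

lemma comb_full (F : Finset (Sym2 (Fin n))) (hnd : ∀ e ∈ F, ¬ e.IsDiag)
    (hcard : F.card ≤ (d + 2).choose 2) (hne : F.Nonempty)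
    (hdeg : ∀ v : Fin n, (∃ e ∈ F, v ∈ e) → d + 1 ≤ (F.filter (fun e => v ∈ e)).card) :
    F.card = (d + 2).choose 2 ∧
      ∃ S : Finset (Fin n), S.card = d + 2 ∧
        (↑F : Set (Sym2 (Fin n))) = {e : Sym2 (Fin n) | ¬ e.IsDiag ∧ ∀ a ∈ e, a ∈ S} := by
  classical
  set V : Finset (Fin n) := univ.filter (fun v => ∃ e ∈ F, v ∈ e) with hV
  have hVmem : ∀ v, v ∈ V ↔ ∃ e ∈ F, v ∈ e := by intro v; simp [hV]
  have htwo : 2 * (d + 2).choose 2 = (d + 2) * (d + 1) := by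
    have he2 : 2 ∣ (d + 2) * (d + 1) := by
      rw [mul_comm]
      exact (Nat.even_mul_succ_self (d + 1)).two_dvd
    rw [Nat.choose_two_right]
    have h1 : d + 2 - 1 = d + 1 := by omega
    rw [h1, Nat.mul_div_cancel' he2]
  have hother : ∀ v ∈ V, (F.filter (fun e => v ∈ e)).card ≤ V.card - 1 := by
    intro v hv
    have hc : (V.erase v).card = V.card - 1 := Finset.card_erase_of_mem hv
    rw [← hc]
    apply Finset.card_le_card_of_injOn
      (f := fun e => if h : v ∈ e then Sym2.Mem.other h else v)
    · intro e he
      obtain ⟨heF, hve⟩ := Finset.mem_filter.1 he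
      beta_reduce
      rw [dif_pos hve]
      refine Finset.mem_erase.2 ⟨Sym2.other_ne (hnd e heF) hve, ?_⟩
      exact (hVmem _).2 ⟨e, heF, Sym2.other_mem hve⟩
    · intro e1 h1 e2 h2 heq
      obtain ⟨h1F, h1v⟩ := Finset.mem_filter.1 (Finset.mem_coe.1 h1)
      obtain ⟨h2F, h2v⟩ := Finset.mem_filter.1 (Finset.mem_coe.1 h2)
      dsimp only at heq
      rw [dif_pos h1v, dif_pos h2v] at heq
      have := Sym2.other_spec h1v
      rw [heq, Sym2.other_spec h2v] at this
      exact this.symm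
  have hsum : ∑ v ∈ V, (F.filter (fun e => v ∈ e)).card = 2 * F.card := by
    rw [← sum_deg_eq F hnd]
    apply Finset.sum_subset (Finset.subset_univ V)
    intro v _ hvV
    have hempty : F.filter (fun e => v ∈ e) = ∅ :=
      Finset.filter_eq_empty_iff.2 fun {e} he hve => hvV ((hVmem v).2 ⟨e, he, hve⟩)
    simp [hempty]
  have hlower : (d + 1) * V.card ≤ 2 * F.card := by
    rw [← hsum, mul_comm]
    calc V.card * (d + 1) = ∑ _v ∈ V, (d + 1) := by rw [Finset.sum_const, smul_eq_mul]
    _ ≤ ∑ v ∈ V, (F.filter (fun e => v ∈ e)).card :=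
        Finset.sum_le_sum fun v hv => hdeg v ((hVmem v).1 hv)
  have hVle : V.card ≤ d + 2 := by
    have h2 : (d + 1) * V.card ≤ (d + 1) * (d + 2) := by
      calc (d + 1) * V.card ≤ 2 * F.card := hlower
      _ ≤ 2 * (d + 2).choose 2 := by omega
      _ = (d + 1) * (d + 2) := by rw [htwo]; ring
    exact Nat.le_of_mul_le_mul_left h2 (by omega)
  obtain ⟨e0, he0⟩ := hne
  have hv0 : e0.out.1 ∈ V := (hVmem _).2 ⟨e0, he0, Sym2.out_fst_mem e0⟩
  have hVcard : V.card = d + 2 := by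
    have h1 := hdeg e0.out.1 ((hVmem _).1 hv0)
    have h2 := hother e0.out.1 hv0
    omega
  have hdegeq : ∀ v ∈ V, (F.filter (fun e => v ∈ e)).card = d + 1 := by
    intro v hv
    have h1 := hdeg v ((hVmem v).1 hv)
    have h2 := hother v hv
    omega
  have hFcard : F.card = (d + 2).choose 2 := by
    have : ∑ v ∈ V, (F.filter (fun e => v ∈ e)).card = (d + 2) * (d + 1) := by
      rw [Finset.sum_congr rfl hdegeq, Finset.sum_const, smul_eq_mul, hVcard]
    omega
  have hcomplete : ∀ a ∈ V, ∀ b ∈ V, a ≠ b → s(a, b) ∈ F := by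
    intro a ha b hb hab
    have hsurj := Finset.surj_on_of_inj_on_of_card_le
      (s := F.filter (fun e => a ∈ e)) (t := V.erase a)
      (f := fun e he => Sym2.Mem.other ((Finset.mem_filter.1 he).2))
      (fun e he => by
        obtain ⟨heF, hae⟩ := Finset.mem_filter.1 he
        exact Finset.mem_erase.2 ⟨Sym2.other_ne (hnd e heF) hae,
          (hVmem _).2 ⟨e, heF, Sym2.other_mem hae⟩⟩)
      (fun e1 e2 h1 h2 heq => by
        have hs := Sym2.other_spec (Finset.mem_filter.1 h1).2
        rw [heq, Sym2.other_spec (Finset.mem_filter.1 h2).2] at hs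
        exact hs.symm)
      (by rw [Finset.card_erase_of_mem ha, hVcard, hdegeq a ha]; omega)
    obtain ⟨e, he, hbe⟩ := hsurj b (Finset.mem_erase.2 ⟨hab.symm, hb⟩)
    have := Sym2.other_spec (Finset.mem_filter.1 he).2
    rw [← hbe] at this
    rw [this]
    exact (Finset.mem_filter.1 he).1
  refine ⟨hFcard, V, hVcard, ?_⟩
  ext e
  simp only [Set.mem_setOf_eq, Finset.mem_coe]
  constructor
  · intro he
    exact ⟨hnd e he, fun a ha => (hVmem a).2 ⟨e, he, ha⟩⟩
  · intro ⟨hnd', hmem⟩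
    revert hnd' hmem
    induction e using Sym2.ind with
    | _ a b =>
      intro hnd' hmem
      have hab : a ≠ b := by simpa using hnd'
      exact hcomplete a (hmem a (by simp [Sym2.mem_iff])) b
        (hmem b (by simp [Sym2.mem_iff])) hab

end Comb

section Induction

variable {n d : ℕ}

/-- Main inductive lemma: at a generic configuration, the rows attached to a
small non-complete edge set are linearly independent. -/
lemma rows_indep (p : Fin n → Fin d → ℂ) (hp : GenericConfigC p) :
    ∀ N : ℕ, ∀ F : Finset (Sym2 (Fin n)), F.card = N →
      (∀ e ∈ F, ¬ e.IsDiag) → F.card ≤ (d + 2).choose 2 →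
      ¬ (F.card = (d + 2).choose 2 ∧ ∃ S : Finset (Fin n), S.card = d + 2 ∧
          (↑F : Set (Sym2 (Fin n))) = {e : Sym2 (Fin n) | ¬ e.IsDiag ∧ ∀ a ∈ e, a ∈ S}) →
      LinearIndependent ℂ (fun e : {x // x ∈ F} => rowVec p (e : Sym2 (Fin n))) := by
  classical
  intro N
  induction N using Nat.strong_induction_on with
  | _ N ih =>
    intro F hFN hnd hcard hnotfull
    rcases F.eq_empty_or_nonempty with rfl | hne
    · haveI : IsEmpty {x // x ∈ (∅ : Finset (Sym2 (Fin n)))} :=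
        ⟨fun x => absurd x.2 (Finset.notMem_empty x.1)⟩
      exact linearIndependent_empty_type
    by_cases hall : ∀ v : Fin n, (∃ e ∈ F, v ∈ e) →
        d + 1 ≤ (F.filter (fun e => v ∈ e)).card
    · exact absurd (comb_full F hnd hcard hne hall) hnotfull
    push_neg at hall
    obtain ⟨v, hvcov, hdv⟩ := hall
    rw [Fintype.linearIndependent_iff]
    intro g hg
    set G : Sym2 (Fin n) → ℂ := fun e => if h : e ∈ F then g ⟨e, h⟩ else 0 with hG
    have hGg : ∀ e : {x // x ∈ F}, G e.1 = g e := by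
      intro e; rw [hG]; simp only [dif_pos e.2]
    have hgF : ∑ e ∈ F, G e • rowVec p e = 0 := by
      rw [← Finset.sum_attach F (fun e => G e • rowVec p e)]
      rw [← hg]
      rw [← Finset.univ_eq_attach]
      exact Finset.sum_congr rfl fun e _ => by rw [hGg]
    set T : Finset (Sym2 (Fin n)) := F.filter (fun e => v ∈ e) with hT
    have hTcard : T.card ≤ d := by
      have := hdv; omega
    set w : Sym2 (Fin n) → Fin n := fun e => if h : v ∈ e then Sym2.Mem.other h else v
      with hw
    -- Step A : coefficients of edges at v vanish
    have hstepA : ∀ e ∈ T, G e = 0 := by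
      have hrow : ∀ l : Fin d, ∑ e ∈ T, G e * (p v l - p (w e) l) = 0 := by
        intro l
        have h0 := congrFun hgF (v, l)
        rw [Finset.sum_apply] at h0
        simp only [Pi.smul_apply, smul_eq_mul] at h0
        rw [← Finset.sum_filter_add_sum_filter_not F (fun e => v ∈ e)
          (fun e => G e * rowVec p e (v, l))] at h0
        have hz : ∑ e ∈ F.filter (fun e => v ∉ e), G e * rowVec p e (v, l) = 0 := by
          apply Finset.sum_eq_zero
          intro e he
          rw [rowVec_apply_not_mem p (Finset.mem_filter.1 he).2 l, mul_zero]
        rw [hz, add_zero] at h0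
        have h1 : ∑ e ∈ T, G e * rowVec p e (v, l)
            = ∑ e ∈ T, G e * (2 * (p v l - p (w e) l)) := by
          apply Finset.sum_congr rfl
          intro e he
          obtain ⟨heF, hve⟩ := Finset.mem_filter.1 he
          rw [rowVec_apply_other p hve (hnd e heF) l, hw]
          simp only [dif_pos hve]
        rw [h1] at h0
        have h2 : ∑ e ∈ T, G e * (2 * (p v l - p (w e) l))
            = 2 * ∑ e ∈ T, G e * (p v l - p (w e) l) := by
          rw [Finset.mul_sum]
          apply Finset.sum_congr rfl
          intro e _; ring
        rw [h2] at h0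
        exact (mul_eq_zero.1 h0).resolve_left two_ne_zero
      -- apply genericity
      have hcsub : (fun e : {x // x ∈ T} => G e.1) = 0 := by
        apply generic_diffs_indep hp (v := v) (u := fun e : {x // x ∈ T} => w e.1)
        · rw [Fintype.card_coe]; exact hTcard
        · intro e1 e2 heq
          obtain ⟨h1F, h1v⟩ := Finset.mem_filter.1 e1.2
          obtain ⟨h2F, h2v⟩ := Finset.mem_filter.1 e2.2
          apply Subtype.ext
          rw [hw] at heq
          simp only [dif_pos h1v, dif_pos h2v] at heq
          have hs := Sym2.other_spec h1v
          rw [heq, Sym2.other_spec h2v] at hs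
          exact hs.symm
        · intro e
          obtain ⟨heF, hve⟩ := Finset.mem_filter.1 e.2
          rw [hw]
          simp only [dif_pos hve]
          exact Sym2.other_ne (hnd e.1 heF) hve
        · intro l
          rw [Finset.univ_eq_attach,
            Finset.sum_attach T (fun e => G e * (p v l - p (w e) l))]
          exact hrow l
      intro e he
      exact congrFun hcsub ⟨e, he⟩
    -- Step B : remaining edges, use induction hypothesis
    set F' : Finset (Sym2 (Fin n)) := F.filter (fun e => v ∉ e) with hF'
    have hF'lt : F'.card < N := by
      rw [← hFN]
      apply Finset.card_lt_card
      rw [Finset.ssubset_iff_of_subset (Finset.filter_subset _ _)]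
      obtain ⟨e, heF, hve⟩ := hvcov
      exact ⟨e, heF, by simp [hF', heF, hve]⟩
    have hstepB : ∀ e ∈ F', G e = 0 := by
      have hind := ih F'.card hF'lt F' rfl
        (fun e he => hnd e (Finset.filter_subset _ _ he))
        (by omega)
        (by
          rintro ⟨hc, -⟩
          omega)
      rw [Fintype.linearIndependent_iff] at hind
      have hsum' : ∑ e : {x // x ∈ F'}, G e.1 • rowVec p (e : Sym2 (Fin n)) = 0 := by
        rw [Finset.univ_eq_attach, Finset.sum_attach F' (fun e => G e • rowVec p e)]
        rw [← Finset.sum_filter_add_sum_filter_not F (fun e => v ∈ e)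
          (fun e => G e • rowVec p e)] at hgF
        have hz : ∑ e ∈ T, G e • rowVec p e = 0 := by
          apply Finset.sum_eq_zero
          intro e he
          rw [hstepA e he, zero_smul]
        rw [hz, zero_add] at hgF
        exact hgF
      intro e he
      exact hind (fun e => G e.1) hsum' ⟨e, he⟩
    intro e
    rw [← hGg e]
    by_cases hve : v ∈ e.1
    · exact hstepA e.1 (Finset.mem_filter.2 ⟨e.2, hve⟩)
    · exact hstepB e.1 (Finset.mem_filter.2 ⟨e.2, hve⟩)

end Induction

/-- Let `d ≥ 1` and let `E` be an edge measurement ensemble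
(a finite sequence of distinct non-diagonal edges of `K_n`) with
`|E| ≤ C(d+2,2)` edges.  If `E` is infinitesimally dependent in `d` dimensions —
that is, at some generic complex configuration the differential of the squared
measurement map `m_E` has rank smaller than `|E|` — then `|E| = C(d+2,2)` and
`E` consists of the edges of a complete subgraph `K_{d+2}` of `K_n`. -/
theorem infinitesimally_dependent_small_ensemble_is_Kd2
    {n d k : ℕ} (hd : 1 ≤ d)
    (E : Fin k → Sym2 (Fin n))
    (hEinj : Function.Injective E) (hEdiag : ∀ j, ¬ (E j).IsDiag)
    (hk : k ≤ (d + 2).choose 2)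
    (hdep : ∃ p : Fin n → Fin d → ℂ, GenericConfigC p ∧
      Module.finrank ℂ (LinearMap.range ((fderiv ℂ (mE E) p).toLinearMap)) < k) :
    k = (d + 2).choose 2 ∧
    ∃ S : Finset (Fin n), S.card = d + 2 ∧
      Set.range E = {e : Sym2 (Fin n) | ¬ e.IsDiag ∧ ∀ a ∈ e, a ∈ S} := by
  classical
  obtain ⟨p, hp, hrank⟩ := hdep
  by_contra hcon
  set F : Finset (Sym2 (Fin n)) := Finset.image E Finset.univ with hF
  have hFcard : F.card = k := by
    rw [hF, Finset.card_image_of_injective _ hEinj, Finset.card_univ, Fintype.card_fin]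
  have hFrange : (↑F : Set (Sym2 (Fin n))) = Set.range E := by
    rw [hF, Finset.coe_image, Finset.coe_univ, Set.image_univ]
  have hFnd : ∀ e ∈ F, ¬ e.IsDiag := by
    intro e he
    obtain ⟨j, -, rfl⟩ := Finset.mem_image.1 he
    exact hEdiag j
  have hnotfull : ¬ (F.card = (d + 2).choose 2 ∧ ∃ S : Finset (Fin n), S.card = d + 2 ∧
      (↑F : Set (Sym2 (Fin n))) = {e : Sym2 (Fin n) | ¬ e.IsDiag ∧ ∀ a ∈ e, a ∈ S}) := by
    rw [hFcard, hFrange]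
    exact hcon
  have hindep := rows_indep p hp F.card F rfl hFnd (by omega) hnotfull
  have hJ : LinearIndependent ℂ (Jmat E p) := by
    have hcomp : (Jmat E p : Fin k → (Fin n × Fin d) → ℂ)
        = (fun e : {x // x ∈ F} => rowVec p (e : Sym2 (Fin n)))
          ∘ (fun j => (⟨E j, Finset.mem_image_of_mem E (Finset.mem_univ j)⟩ :
            {x // x ∈ F})) := rfl
    rw [hcomp]
    exact hindep.comp _ fun j1 j2 h => hEinj (congrArg Subtype.val h)
  rw [finrank_fderiv_eq E p hJ] at hrank
  exact lt_irrefl k hrank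
end

section
/- For any n ≥ 3, any cycle automorphism of the complete graph K_n is induced by a vertex relabeling, i.e., it equals the edge permutation arising from a permutation of the vertices of K_n. -/
/-- Edges of the complete graph `K_n`: unordered pairs of distinct vertices. -/
abbrev Edge (n : ℕ) : Type := {e : Sym2 (Fin n) // ¬ e.IsDiag}

/-- A set of edges of `K_n` is a cycle edge set if it is the edge set of some
cycle in the complete graph on `Fin n`. -/
def IsCycleEdgeSet {n : ℕ} (F : Set (Sym2 (Fin n))) : Prop :=
  ∃ (u : Fin n) (w : (⊤ : SimpleGraph (Fin n)).Walk u u),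
    w.IsCycle ∧ F = {e | e ∈ w.edges}

/-! Three edges of `K_n` form a cycle exactly when they form a triangle, so a cycle automorphism
`P` maps triangles to triangles and non-triangles to non-triangles. Two edges at a common
vertex lie in a triangle, so `P` preserves meeting edges; three pairwise meeting edges form
either a triangle or a star, so `P` also maps stars to stars. Hence the edges at a vertex `v`
are sent to edges through a common vertex `σ v`. The map `σ` is injective because a triangle
is not sent to a star, and `P s(x, y)` contains both `σ x` and `σ y`. -/

section Triangle

variable {α : Type*}

def IsTriangle (F : Set (Sym2 α)) : Prop :=
  ∃ a b c : α, a ≠ b ∧ b ≠ c ∧ a ≠ c ∧ F = {s(a, b), s(b, c), s(c, a)}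

theorem IsTriangle.exists_mem_mem {F : Set (Sym2 α)} (hF : IsTriangle F) {x y : Sym2 α}
    (hx : x ∈ F) (hy : y ∈ F) : ∃ t, t ∈ x ∧ t ∈ y := by
  obtain ⟨a, b, c, -, -, -, rfl⟩ := hF
  simp only [Set.mem_insert_iff, Set.mem_singleton_iff] at hx hy
  rcases hx with rfl | rfl | rfl <;> rcases hy with rfl | rfl | rfl <;> simp

theorem not_isTriangle_of_mem_of_mem_of_mem {x y z : Sym2 α} {t : α}
    (hx : t ∈ x) (hy : t ∈ y) (hz : t ∈ z) : ¬ IsTriangle {x, y, z} := by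
  rintro ⟨a, b, c, hab, hbc, hac, hF⟩
  have hmem : ∀ e ∈ ({s(a, b), s(b, c), s(c, a)} : Set (Sym2 α)), t ∈ e := by
    rw [← hF]
    rintro e (rfl | rfl | rfl) <;> assumption
  have h₁ := hmem s(a, b) (by simp)
  have h₂ := hmem s(b, c) (by simp)
  have h₃ := hmem s(c, a) (by simp)
  simp only [Sym2.mem_iff] at h₁ h₂ h₃
  grind

theorem isTriangle_of_exists_mem_mem {x y z : Sym2 α}
    (hxy : ∃ t, t ∈ x ∧ t ∈ y) (hxz : ∃ t, t ∈ x ∧ t ∈ z) (hyz : ∃ t, t ∈ y ∧ t ∈ z)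
    (hxyz : ¬ ∃ t, t ∈ x ∧ t ∈ y ∧ t ∈ z) : IsTriangle {x, y, z} := by
  obtain ⟨a, hax, hay⟩ := hxy
  obtain ⟨b, hbx, hbz⟩ := hxz
  obtain ⟨c, hcy, hcz⟩ := hyz
  have hab : a ≠ b := by rintro rfl; exact hxyz ⟨a, hax, hay, hbz⟩
  have hac : a ≠ c := by rintro rfl; exact hxyz ⟨a, hax, hay, hcz⟩
  have hbc : b ≠ c := by rintro rfl; exact hxyz ⟨b, hbx, hcy, hbz⟩
  refine ⟨a, b, c, hab, hbc, hac, ?_⟩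
  rw [(Sym2.mem_and_mem_iff hab).mp ⟨hax, hbx⟩, (Sym2.mem_and_mem_iff hac).mp ⟨hay, hcy⟩,
    (Sym2.mem_and_mem_iff hbc).mp ⟨hbz, hcz⟩, Sym2.eq_swap (a := a) (b := c)]
  exact congrArg (insert _) (Set.pair_comm _ _)

end Triangle

section CycleEdgeSet

variable {n : ℕ}

theorem IsTriangle.isCycleEdgeSet {F : Set (Sym2 (Fin n))} (hF : IsTriangle F) :
    IsCycleEdgeSet F := by
  obtain ⟨a, b, c, hab, hbc, hac, rfl⟩ := hF
  refine ⟨a, .cons hab (.cons hbc (.cons hac.symm .nil)), ?_, by ext; simp⟩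
  simp [SimpleGraph.Walk.isCycle_def, hab, hbc, hac, hab.symm, hac.symm]

theorem isCycleEdgeSet_triple_iff {x y z : Sym2 (Fin n)} :
    IsCycleEdgeSet {x, y, z} ↔ IsTriangle {x, y, z} := by
  refine ⟨fun ⟨u, w, hw, hF⟩ => ?_, IsTriangle.isCycleEdgeSet⟩
  have hlen : w.length = 3 := by
    classical
    have hsub : w.edges.toFinset ⊆ {x, y, z} := fun e he => by
      simpa using (hF ▸ List.mem_toFinset.mp he : e ∈ ({x, y, z} : Set _))
    have := (Finset.card_le_card hsub).trans Finset.card_le_three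
    rw [List.toFinset_card_of_nodup hw.edges_nodup, SimpleGraph.Walk.length_edges] at this
    have := hw.three_le_length
    omega
  match w, hw, hlen with
  | .cons hab (.cons hbc (.cons hca .nil)), _, _ =>
    exact ⟨_, _, _, hab.ne, hbc.ne, hca.ne.symm, hF.trans (by ext; simp)⟩

end CycleEdgeSet

theorem Sym2.eq_map_of_forall_mem {α β : Type*} {f : α → β} (hf : Function.Injective f)
    {z : Sym2 α} (hz : ¬ z.IsDiag) {z' : Sym2 β} (h : ∀ a ∈ z, f a ∈ z') :
    z' = Sym2.map f z := by
  induction z using Sym2.ind with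
  | _ a b =>
    rw [Sym2.map_mk]
    exact (Sym2.mem_and_mem_iff (hf.ne (by simpa using hz))).mp
      ⟨h a (Sym2.mem_mk_left a b), h b (Sym2.mem_mk_right a b)⟩

namespace Edge

variable {n : ℕ}

def ofNe {a b : Fin n} (h : a ≠ b) : Edge n := ⟨s(a, b), Sym2.mk_isDiag_iff.not.mpr h⟩

end Edge

def IsCycleAutomorphism {n : ℕ} (P : Equiv.Perm (Edge n)) : Prop :=
  ∀ F : Set (Edge n),
    IsCycleEdgeSet (Subtype.val '' F) ↔ IsCycleEdgeSet (Subtype.val '' (⇑P '' F))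

namespace IsCycleAutomorphism

variable {n : ℕ} {P : Equiv.Perm (Edge n)}

theorem isTriangle_apply_iff (hP : IsCycleAutomorphism P) (e f g : Edge n) :
    IsTriangle {(P e).1, (P f).1, (P g).1} ↔ IsTriangle {e.1, f.1, g.1} := by
  have := hP {e, f, g}
  simp only [Set.image_insert_eq, Set.image_singleton, isCycleEdgeSet_triple_iff] at this
  exact this.symm

theorem exists_mem_mem_apply (hP : IsCycleAutomorphism P) {e f : Edge n} (hef : e ≠ f)
    {t : Fin n} (he : t ∈ e.1) (hf : t ∈ f.1) : ∃ s, s ∈ (P e).1 ∧ s ∈ (P f).1 := by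
  obtain ⟨a, hea⟩ := Sym2.mem_iff_exists.mp he
  obtain ⟨b, hfb⟩ := Sym2.mem_iff_exists.mp hf
  have hta : t ≠ a := fun h => e.2 (by simp [hea, h])
  have htb : t ≠ b := fun h => f.2 (by simp [hfb, h])
  have hab : a ≠ b := fun h => hef (Subtype.ext (by rw [hea, hfb, h]))
  have htri : IsTriangle {e.1, f.1, (Edge.ofNe hab).1} :=
    ⟨t, a, b, hta, hab, htb, by
      rw [hea, hfb, Sym2.eq_swap (a := t) (b := b), Set.pair_comm]; rfl⟩
  exact ((hP.isTriangle_apply_iff _ _ _).mpr htri).exists_mem_mem (by simp) (by simp)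

theorem exists_mem_apply_of_mem (hP : IsCycleAutomorphism P) {e f g : Edge n}
    (hef : e ≠ f) (heg : e ≠ g) (hfg : f ≠ g) {t : Fin n}
    (he : t ∈ e.1) (hf : t ∈ f.1) (hg : t ∈ g.1) :
    ∃ s, s ∈ (P e).1 ∧ s ∈ (P f).1 ∧ s ∈ (P g).1 := by
  by_contra h
  have htri := isTriangle_of_exists_mem_mem (hP.exists_mem_mem_apply hef he hf)
    (hP.exists_mem_mem_apply heg he hg) (hP.exists_mem_mem_apply hfg hf hg) h
  exact not_isTriangle_of_mem_of_mem_of_mem he hf hg ((hP.isTriangle_apply_iff _ _ _).mp htri)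

theorem exists_forall_mem_apply (hP : IsCycleAutomorphism P) (hn : 3 ≤ n) (v : Fin n) :
    ∃ w, ∀ e : Edge n, v ∈ e.1 → w ∈ (P e).1 := by
  obtain ⟨a, hav, -⟩ := Fin.exists_ne_and_ne_of_two_lt v v hn
  obtain ⟨b, hbv, hba⟩ := Fin.exists_ne_and_ne_of_two_lt v a hn
  set e₁ := Edge.ofNe hav.symm
  set e₂ := Edge.ofNe hbv.symm
  have h₁₂ : e₁ ≠ e₂ := fun h => hba (Sym2.congr_right.mp (congrArg Subtype.val h)).symm
  obtain ⟨w, hw₁, hw₂⟩ := hP.exists_mem_mem_apply h₁₂ (Sym2.mem_mk_left v a)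
    (Sym2.mem_mk_left v b)
  refine ⟨w, fun e he => ?_⟩
  by_cases he₁ : e₁ = e
  · exact he₁ ▸ hw₁
  by_cases he₂ : e₂ = e
  · exact he₂ ▸ hw₂
  obtain ⟨s, hs₁, hs₂, hse⟩ := hP.exists_mem_apply_of_mem h₁₂ he₁ he₂
    (Sym2.mem_mk_left v a) (Sym2.mem_mk_left v b) he
  have hP₁₂ : (P e₁).1 ≠ (P e₂).1 := fun h => h₁₂ (P.injective (Subtype.ext h))
  obtain rfl : s = w := by_contra fun hsw => hP₁₂ (Sym2.eq_of_ne_mem hsw hs₁ hw₁ hs₂ hw₂)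
  exact hse

theorem injective_of_forall_mem_apply (hP : IsCycleAutomorphism P) (hn : 3 ≤ n)
    {σ : Fin n → Fin n} (hσ : ∀ v (e : Edge n), v ∈ e.1 → σ v ∈ (P e).1) :
    Function.Injective σ := by
  intro x y hxy
  by_contra hne
  obtain ⟨c, hcx, hcy⟩ := Fin.exists_ne_and_ne_of_two_lt x y hn
  have htri : IsTriangle {(Edge.ofNe hne).1, (Edge.ofNe hcy.symm).1, (Edge.ofNe hcx).1} :=
    ⟨x, y, c, hne, hcy.symm, hcx.symm, rfl⟩
  refine not_isTriangle_of_mem_of_mem_of_mem (t := σ x) ?_ ?_ ?_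
    ((hP.isTriangle_apply_iff _ _ _).mpr htri)
  · exact hσ x _ (Sym2.mem_mk_left x y)
  · exact hxy ▸ hσ y _ (Sym2.mem_mk_left y c)
  · exact hσ x _ (Sym2.mem_mk_right c x)

end IsCycleAutomorphism

/-- For any `n ≥ 3`, any cycle automorphism of `K_n` (a
bijection of the edge set under which a set of edges is a cycle edge set if and
only if its image is) is induced by a vertex relabeling: it equals the edge
permutation arising from a permutation of the vertices of `K_n`. -/
theorem cycle_automorphism_is_vertex_relabeling
    {n : ℕ} (hn : 3 ≤ n) (P : Equiv.Perm (Edge n))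
    (hP : ∀ F : Set (Edge n),
      IsCycleEdgeSet (Subtype.val '' F) ↔ IsCycleEdgeSet (Subtype.val '' (⇑P '' F))) :
    ∃ σ : Equiv.Perm (Fin n), ∀ e : Edge n, (P e : Sym2 (Fin n)) = Sym2.map σ e.val := by
  have hP : IsCycleAutomorphism P := hP
  choose σ hσ using hP.exists_forall_mem_apply hn
  have hinj := hP.injective_of_forall_mem_apply hn hσ
  exact ⟨Equiv.ofBijective σ hinj.bijective_of_finite,
    fun e => Sym2.eq_map_of_forall_mem hinj e.2 fun v hv => hσ v e hv⟩
end

section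
/- Let d ≥ 2 and let p and q be generic configurations of d+2 points in ℝ^d that are related by a similarity σ (i.e., q_i = σ(p_i) for all i). Suppose moreover that p and q share an unordered subset S of d+1 common points, that is, some d+1 of the points of p coincide as a set with d+1 of the points of q. Then p = q. -/
/-- Euclidean distance between two points of ℝ^d. -/
noncomputable def eudist {d : ℕ} (x y : Fin d → ℝ) : ℝ :=
  Real.sqrt (∑ k, (x k - y k) ^ 2)

/-- Squared Euclidean length along an edge (an unordered pair of vertices) of a
configuration. -/
noncomputable def sqLenR {n d : ℕ} (p : Fin n → Fin d → ℝ) : Sym2 (Fin n) → ℝ :=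
  Sym2.lift ⟨fun i j => ∑ k, (p i k - p j k) ^ 2,
    fun i j => Finset.sum_congr rfl fun k _ => by ring⟩

/-- Euclidean length along an edge of a configuration. -/
noncomputable def lenR {n d : ℕ} (p : Fin n → Fin d → ℝ) (e : Sym2 (Fin n)) : ℝ :=
  Real.sqrt (sqLenR p e)

/-- A generic configuration of `n` points in ℝ^d: its `d·n` coordinates satisfy no
nontrivial polynomial equation with rational coefficients. -/
def GenericConfig {n d : ℕ} (p : Fin n → Fin d → ℝ) : Prop :=
  ∀ f : MvPolynomial (Fin n × Fin d) ℚ, f ≠ 0 →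
    MvPolynomial.aeval (fun ik : Fin n × Fin d => p ik.1 ik.2) f ≠ 0

/-- A congruence of ℝ^d: a distance-preserving bijection. -/
def IsCongruence {d : ℕ} (f : (Fin d → ℝ) → (Fin d → ℝ)) : Prop :=
  Function.Bijective f ∧ ∀ x y, eudist (f x) (f y) = eudist x y

/-- A similarity of ℝ^d: a bijection scaling all distances by a fixed positive
ratio (equivalently, the composition of a positive scaling and a
distance-preserving bijection). -/
def IsSimilarity {d : ℕ} (f : (Fin d → ℝ) → (Fin d → ℝ)) : Prop :=
  Function.Bijective f ∧ ∃ r : ℝ, 0 < r ∧ ∀ x y, eudist (f x) (f y) = r * eudist x y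

/-!
Matching the shared vertices yields an injection `φ` of the simplex indices with
`|p i - p j| = r * |p (φ i) - p (φ j)|`. Eliminating `r` gives
`|p i - p j| * |p (φ i) - p (φ k)| = |p i - p k| * |p (φ i) - p (φ j)|`, a polynomial relation
among the coordinates of `p` that genericity forbids unless `φ` maps the pair `{i, j}` onto
itself; with `d + 1 ≥ 3` vertices this forces `φ = id`, hence `r = 1` and `q` agrees with `p` on
the simplex. A generic simplex is nondegenerate, so the remaining point of `q`, having the same
distances to its vertices as the remaining point of `p`, coincides with it.
-/

open MvPolynomial Finset

lemma eudist_sq {d : ℕ} (x y : Fin d → ℝ) : eudist x y ^ 2 = ∑ k, (x k - y k) ^ 2 :=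
  Real.sq_sqrt (sum_nonneg fun _ _ => sq_nonneg _)

lemma eudist_self {d : ℕ} (x : Fin d → ℝ) : eudist x x = 0 := by
  simp [eudist]

lemma eudist_sq_const {d : ℕ} (s t : ℝ) :
    eudist (fun _ : Fin d => s) (fun _ => t) ^ 2 = d * (s - t) ^ 2 := by
  simp [eudist_sq]

lemma eq_of_eudist_eq_of_det_ne_zero {d : ℕ} {x y o : Fin d → ℝ} {v : Fin d → Fin d → ℝ}
    (hdet : (Matrix.of fun s k => v s k - o k).det ≠ 0)
    (ho : eudist x o = eudist y o) (hv : ∀ s, eudist x (v s) = eudist y (v s)) : x = y := by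
  refine sub_eq_zero.mp (Matrix.eq_zero_of_mulVec_eq_zero hdet (funext fun s => ?_))
  have h₀ := congrArg (· ^ 2) ho
  have h₁ := congrArg (· ^ 2) (hv s)
  simp only [eudist_sq] at h₀ h₁
  have hpol : 2 * ∑ k, (v s k - o k) * (x k - y k) =
      (∑ k, (x k - o k) ^ 2 - ∑ k, (y k - o k) ^ 2) -
        (∑ k, (x k - v s k) ^ 2 - ∑ k, (y k - v s k) ^ 2) := by
    simp only [mul_sum, ← sum_sub_distrib]
    exact sum_congr rfl fun _ _ => by ring
  simp only [Matrix.mulVec, dotProduct, Matrix.of_apply, Pi.sub_apply, Pi.zero_apply]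
  linarith

noncomputable def sqDistPoly {n d : ℕ} (i j : Fin n) : MvPolynomial (Fin n × Fin d) ℚ :=
  ∑ k, (X (i, k) - X (j, k)) ^ 2

lemma aeval_sqDistPoly {n d : ℕ} (x : Fin n → Fin d → ℝ) (i j : Fin n) :
    aeval (Function.uncurry x) (sqDistPoly i j) = eudist (x i) (x j) ^ 2 := by
  simp [sqDistPoly, eudist_sq]

namespace GenericConfig

variable {n d : ℕ} {p : Fin n → Fin d → ℝ}

lemma aeval_ne_zero (hp : GenericConfig p) {f : MvPolynomial (Fin n × Fin d) ℚ}
    (x : Fin n → Fin d → ℝ) (hx : aeval (Function.uncurry x) f ≠ 0) :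
    aeval (Function.uncurry p) f ≠ 0 :=
  hp f (ne_zero_of_map hx)

lemma eudist_ne_zero (hd : 0 < d) (hp : GenericConfig p) {i j : Fin n} (hij : i ≠ j) :
    eudist (p i) (p j) ≠ 0 := by
  have := hp.aeval_ne_zero (f := sqDistPoly i j) (fun u _ => ((u : ℕ) : ℝ)) (by
    rw [aeval_sqDistPoly, eudist_sq_const]
    have : ((i : ℕ) : ℝ) ≠ j := by exact_mod_cast Fin.val_ne_of_ne hij
    positivity)
  rw [aeval_sqDistPoly] at this
  exact pow_ne_zero_iff two_ne_zero |>.mp this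

lemma injective (hd : 0 < d) (hp : GenericConfig p) : Function.Injective p := by
  intro i j h
  by_contra hij
  exact hp.eudist_ne_zero hd hij (by rw [h, eudist_self])

/-- Genericity is tested at the configuration collapsing `p b` onto `p a` and keeping all other
points apart: it kills the right-hand side, but not the left-hand side unless `{i, j} = {a, b}`. -/
lemma sym2_eq_of_eudist_mul_eq (hd : 0 < d) (hp : GenericConfig p) {i j k a b c : Fin n}
    (hij : i ≠ j) (hac : a ≠ c) (hbc : b ≠ c)
    (h : eudist (p i) (p j) * eudist (p a) (p c) = eudist (p i) (p k) * eudist (p a) (p b)) :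
    s(i, j) = s(a, b) := by
  by_contra hne
  set τ : Fin n → Fin n := Function.update id b a
  have hτ : ∀ u w, u ≠ w → s(u, w) ≠ s(a, b) → ((τ u : ℕ) : ℝ) - τ w ≠ 0 := by
    intro u w huw huwab
    rw [sub_ne_zero, Ne, Nat.cast_inj, Fin.val_inj]
    simp only [τ, Function.update_apply, id]
    split_ifs <;> grind [Sym2.eq_swap]
  refine hp.aeval_ne_zero (f := sqDistPoly i j * sqDistPoly a c - sqDistPoly i k * sqDistPoly a b)
    (fun u _ => ((τ u : ℕ) : ℝ)) ?_ ?_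
  · simp only [map_sub, map_mul, aeval_sqDistPoly, eudist_sq_const]
    have hτab : ((τ a : ℕ) : ℝ) - τ b = 0 := by simp [τ, Function.update_apply]
    have hτac := hτ a c hac (by simp [hbc.symm, hac.symm])
    have hτij := hτ i j hij hne
    rw [hτab]
    simpa using ⟨⟨hd.ne', hτij⟩, hd.ne', hτac⟩
  · simp only [map_sub, map_mul, aeval_sqDistPoly, ← mul_pow, h, sub_self]

lemma eq_self_of_eudist_eq_mul (hd : 0 < d) (hp : GenericConfig p) {I : Finset (Fin n)}
    (hI : 2 < #I) {φ : Fin n → Fin n} (hφ : Set.InjOn φ I) {r : ℝ}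
    (h : ∀ i ∈ I, ∀ j ∈ I, eudist (p i) (p j) = r * eudist (p (φ i)) (p (φ j))) :
    ∀ i ∈ I, φ i = i := by
  have third : ∀ i ∈ I, ∀ j, ∃ k ∈ I, k ≠ i ∧ k ≠ j := fun i hi j => by
    obtain ⟨k, hk, hkj⟩ := (I.erase i).exists_mem_ne (by rw [card_erase_of_mem hi]; omega) j
    exact ⟨k, mem_of_mem_erase hk, ne_of_mem_erase hk, hkj⟩
  have hpair : ∀ i ∈ I, ∀ j ∈ I, i ≠ j → s(i, j) = s(φ i, φ j) := by
    intro i hi j hj hij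
    obtain ⟨k, hk, hki, hkj⟩ := third i hi j
    refine hp.sym2_eq_of_eudist_mul_eq (k := k) hd hij (hφ.ne hi hk hki.symm)
      (hφ.ne hj hk hkj.symm) ?_
    rw [h i hi j hj, h i hi k hk]
    ring
  intro i hi
  obtain ⟨j, hj, hji⟩ := I.exists_mem_ne (by omega) i
  obtain ⟨k, hk, hki, hkj⟩ := third i hi j
  have hφj : φ i ∈ s(i, j) := hpair i hi j hj hji.symm ▸ Sym2.mem_mk_left _ _
  have hφk : φ i ∈ s(i, k) := hpair i hi k hk hki.symm ▸ Sym2.mem_mk_left _ _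
  rw [Sym2.mem_iff] at hφj hφk
  grind

lemma det_sub_ne_zero (hp : GenericConfig p) {o : Fin n} {ι : Fin d → Fin n}
    (hι : Function.Injective ι) (ho : ∀ s, ι s ≠ o) :
    (Matrix.of fun s k => p (ι s) k - p o k).det ≠ 0 := by
  set G : MvPolynomial (Fin n × Fin d) ℚ := (Matrix.of fun s k => X (ι s, k) - X (o, k)).det
  have hG : ∀ x : Fin n → Fin d → ℝ,
      aeval (Function.uncurry x) G = (Matrix.of fun s k => x (ι s) k - x o k).det := by
    intro x
    rw [AlgHom.map_det]
    congr 1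
    ext s k
    simp
  rw [← hG]
  refine hp.aeval_ne_zero (fun u k => if u = ι k then 1 else 0) ?_
  have hone : (Matrix.of fun s k => (if ι s = ι k then 1 else 0) - if o = ι k then 1 else 0) =
      (1 : Matrix (Fin d) (Fin d) ℝ) := by
    ext s k
    simp [Matrix.one_apply, hι.eq_iff, (ho k).symm]
  rw [hG, hone, Matrix.det_one]
  exact one_ne_zero

lemma eq_of_eudist_eq (hp : GenericConfig p) {I : Finset (Fin n)} (hI : #I = d + 1)
    {x y : Fin d → ℝ} (h : ∀ i ∈ I, eudist x (p i) = eudist y (p i)) : x = y := by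
  set ι := I.orderEmbOfFin hI
  have hmem : ∀ s, ι s ∈ I := I.orderEmbOfFin_mem hI
  exact eq_of_eudist_eq_of_det_ne_zero
    (hp.det_sub_ne_zero (ι.injective.comp (Fin.succ_injective _))
      fun s hs => Fin.succ_ne_zero s (ι.injective hs))
    (h _ (hmem 0)) fun s => h _ (hmem s.succ)

end GenericConfig

theorem similar_configs_sharing_simplex_are_equal_general
    {d : ℕ} (hd : 2 ≤ d) (p q : Fin (d + 2) → Fin d → ℝ)
    (hp : GenericConfig p)
    (σ : (Fin d → ℝ) → (Fin d → ℝ)) (hσ : IsSimilarity σ)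
    (hpq : ∀ i, q i = σ (p i))
    (hS : ∃ I J : Finset (Fin (d + 2)), I.card = d + 1 ∧ J.card = d + 1 ∧
      p '' ↑I = q '' ↑J) :
    p = q := by
  obtain ⟨I, J, hI, -, hIJ⟩ := hS
  obtain ⟨-, r, -, hσr⟩ := hσ
  have hd₀ : 0 < d := by omega
  have hq : ∀ i j, eudist (q i) (q j) = r * eudist (p i) (p j) := fun i j => by
    rw [hpq, hpq, hσr]
  have hφ : ∀ i ∈ I, ∃ j, q j = p i := fun i hi => by
    obtain ⟨j, -, hj⟩ := hIJ ▸ Set.mem_image_of_mem p hi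
    exact ⟨j, hj⟩
  choose! φ hφ using hφ
  have hφ_id : ∀ i ∈ I, φ i = i :=
    hp.eq_self_of_eudist_eq_mul hd₀ (by omega)
      (fun i hi j hj hij => hp.injective hd₀ (by rw [← hφ i hi, ← hφ j hj, hij]))
      (fun i hi j hj => by rw [← hφ i hi, ← hφ j hj]; exact hq _ _)
  have hqI : ∀ i ∈ I, q i = p i := fun i hi => by
    simpa only [hφ_id i hi] using hφ i hi
  have hr : r = 1 := by
    obtain ⟨i, hi, j, hj, hij⟩ := one_lt_card.mp (by omega : 1 < #I)
    have := hq i j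
    rw [hqI i hi, hqI j hj] at this
    exact (mul_eq_right₀ (hp.eudist_ne_zero hd₀ hij)).mp this.symm
  funext m
  refine hp.eq_of_eudist_eq hI fun i hi => ?_
  have := hq m i
  rw [hqI i hi, hr, one_mul] at this
  exact this.symm

/-- Let `d ≥ 2` and let `p` and `q` be generic configurations
of `d+2` points in ℝ^d related by a similarity `σ` (that is `q i = σ (p i)` for
all `i`).  If moreover some `d+1` of the points of `p` coincide, as an unordered
set, with `d+1` of the points of `q`, then `p = q`. -/
theorem similar_configs_sharing_simplex_are_equal
    {d : ℕ} (hd : 2 ≤ d) (p q : Fin (d + 2) → Fin d → ℝ)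
    (hp : GenericConfig p) (hq : GenericConfig q)
    (σ : (Fin d → ℝ) → (Fin d → ℝ)) (hσ : IsSimilarity σ)
    (hpq : ∀ i, q i = σ (p i))
    (hS : ∃ I J : Finset (Fin (d + 2)), I.card = d + 1 ∧ J.card = d + 1 ∧
      p '' ↑I = q '' ↑J) :
    p = q :=
  similar_configs_sharing_simplex_are_equal_general hd p q hp σ hσ hpq hS
end

section
/- Let X and Y be r×r complex matrices and suppose that det(S·X + Y) = 0 for every r×r sign flip matrix S. Then det(Y) = 0. -/
/-!
The map `ε ↦ det (diagonal ε * X + Y)` is affine in each coordinate `ε i` separately, since `ε i`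
enters only through row `i`. An affine function of one variable vanishing at `1` and `-1` vanishes
at `0`, so the coordinates of a sign vector can be set to `0` one at a time without leaving the
zero set of the determinant; at `ε = 0` the determinant is `det Y`.
-/

namespace Matrix

variable {n R : Type*} [Fintype n] [DecidableEq n] [CommRing R]

theorem diagonal_update_mul_add_eq_updateRow (ε : n → R) (a : n) (c : R) (X Y : Matrix n n R) :
    diagonal (Function.update ε a c) * X + Y =
      (diagonal (Function.update ε a 0) * X + Y).updateRow a
        (c • X a + (diagonal (Function.update ε a 0) * X + Y) a) := by
  ext i j
  by_cases hia : i = a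
  · subst hia
    simp
  · simp [updateRow_ne hia, Function.update_of_ne hia]

theorem det_diagonal_update_mul_add (ε : n → R) (a : n) (c : R) (X Y : Matrix n n R) :
    (diagonal (Function.update ε a c) * X + Y).det =
      c * ((diagonal (Function.update ε a 0) * X + Y).updateRow a (X a)).det +
        (diagonal (Function.update ε a 0) * X + Y).det := by
  rw [diagonal_update_mul_add_eq_updateRow, det_updateRow_add, det_updateRow_smul,
    updateRow_eq_self]

theorem det_diagonal_update_zero_mul_add_eq_zero [NoZeroDivisors R] (h2 : (2 : R) ≠ 0)
    (ε : n → R) (a : n) (X Y : Matrix n n R)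
    (hpos : (diagonal (Function.update ε a 1) * X + Y).det = 0)
    (hneg : (diagonal (Function.update ε a (-1)) * X + Y).det = 0) :
    (diagonal (Function.update ε a 0) * X + Y).det = 0 := by
  rw [det_diagonal_update_mul_add] at hpos hneg
  have h : 2 * (diagonal (Function.update ε a 0) * X + Y).det = 0 := by
    linear_combination hpos + hneg
  exact (mul_eq_zero.mp h).resolve_left h2

theorem det_diagonal_mul_add_eq_zero_of_forall_signs [NoZeroDivisors R] (h2 : (2 : R) ≠ 0)
    (X Y : Matrix n n R)
    (h : ∀ ε : n → R, (∀ i, ε i = 1 ∨ ε i = -1) → (diagonal ε * X + Y).det = 0)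
    (s : Finset n) (ε : n → R) (hzero : ∀ i ∈ s, ε i = 0)
    (hsign : ∀ i ∉ s, ε i = 1 ∨ ε i = -1) :
    (diagonal ε * X + Y).det = 0 := by
  induction s using Finset.induction_on generalizing ε with
  | empty => exact h ε fun i => hsign i (Finset.notMem_empty i)
  | @insert a s ha ih =>
    have hupdate : ∀ c : R, c = 1 ∨ c = -1 →
        (diagonal (Function.update ε a c) * X + Y).det = 0 := by
      intro c hc
      apply ih
      · intro i hi
        rw [Function.update_of_ne (ne_of_mem_of_not_mem hi ha)]
        exact hzero i (Finset.mem_insert_of_mem hi)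
      · intro i hi
        by_cases hia : i = a
        · subst hia
          simpa using hc
        · rw [Function.update_of_ne hia]
          exact hsign i (by simp [hia, hi])
    have hε : Function.update ε a 0 = ε := by
      rw [← hzero a (Finset.mem_insert_self a s), Function.update_eq_self]
    rw [← hε]
    exact det_diagonal_update_zero_mul_add_eq_zero h2 ε a X Y
      (hupdate 1 (Or.inl rfl)) (hupdate (-1) (Or.inr rfl))

end Matrix

/-- Let `X` and `Y` be `r × r` complex matrices and suppose
that `det (S * X + Y) = 0` for every `r × r` sign flip matrix `S` (a diagonal
matrix whose diagonal entries are `+1` or `−1`).  Then `det Y = 0`. -/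
theorem det_eq_zero_of_all_sign_flips
    {r : ℕ} (X Y : Matrix (Fin r) (Fin r) ℂ)
    (h : ∀ ε : Fin r → ℂ, (∀ i, ε i = 1 ∨ ε i = -1) →
      (Matrix.diagonal ε * X + Y).det = 0) :
    Y.det = 0 := by
  have h0 := Matrix.det_diagonal_mul_add_eq_zero_of_forall_signs two_ne_zero X Y h Finset.univ 0
    (fun _ _ => rfl) (fun i hi => absurd (Finset.mem_univ i) hi)
  rwa [Pi.zero_def, Matrix.diagonal_zero, zero_mul, zero_add] at h0
end
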